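/- arXiv:1507.02670 — 2 statements merged into one kernel-verified Lean document; each statement's English description precedes it below -/
import Mathlib

section
/- A norm s on ℝ² is minimal for the Reshetnyak energy I²₊(s) = max_{v∈S¹} s(v)² within its SL₂-orbit (i.e. I²₊(s) ≤ I²₊(s∘T) for all T ∈ SL(2,ℝ)) if and only if s is isotropic, i.e. the largest-area ellipse inscribed in the unit ball of s is a round Euclidean disc. -/
/-!
`I²₊(s)` is the square of the least `C` with `s ≤ C ‖·‖`, so the ellipse `M(D̄)` is inscribed in
`{s ≤ 1}` iff `I²₊(s ∘ M) ≤ 1`, and `I²₊(s ∘ (c • M)) = c² I²₊(s ∘ M)`. An inscribed ellipse of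
positive area may be taken with `det M > 0` (compose with a reflection); then
`T = M / √(det M) ∈ SL₂`, and minimality gives `I²₊(s) ≤ I²₊(s ∘ T) ≤ 1 / det M`, so the round disc
of radius `I²₊(s)^(-1/2)`, which is inscribed, is the Loewner ellipse. Conversely, if the Loewner
ellipse is `t D̄` then `I²₊(s) ≤ t⁻²`, and for `T ∈ SL₂` the inscribed ellipse
`I²₊(s ∘ T)^(-1/2) T (D̄)` has area `π / I²₊(s ∘ T) ≤ π t²`.
-/

open Matrix MeasureTheory Real

noncomputable section

/-- The Euclidean plane. -/
abbrev E2 := EuclideanSpace ℝ (Fin 2)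

/-- `SL(2,ℝ)` as matrices of determinant one. -/
abbrev SL2 := Matrix.SpecialLinearGroup (Fin 2) ℝ

/-- The seminorm `v ↦ s (M v)`, i.e. `s ∘ M`. -/
def compM (s : Seminorm ℝ E2) (M : Matrix (Fin 2) (Fin 2) ℝ) : Seminorm ℝ E2 :=
  s.comp (Matrix.toEuclideanLin M)

/-- A seminorm is a norm iff it is positive away from the origin. -/
def IsNorm (s : Seminorm ℝ E2) : Prop := ∀ v : E2, v ≠ 0 → 0 < s v

/-- Monotonicity of a functional on seminorms. -/
def Monot (J : Seminorm ℝ E2 → ℝ) : Prop := ∀ s s' : Seminorm ℝ E2, s' ≤ s → J s' ≤ J s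

/-- Degree 2 homogeneity of a functional on seminorms. -/
def Homog (J : Seminorm ℝ E2 → ℝ) : Prop :=
  ∀ (c : NNReal) (s : Seminorm ℝ E2), J (c • s) = (c : ℝ) ^ 2 * J s

/-- `SL₂`-invariance of a functional on seminorms. -/
def SL2inv (J : Seminorm ℝ E2 → ℝ) : Prop :=
  ∀ (s : Seminorm ℝ E2) (T : SL2), J (compM s (T : Matrix (Fin 2) (Fin 2) ℝ)) = J s

/-- The Reshetnyak energy `I²₊(s) = max_{v ∈ S¹} s(v)²`. -/
def Iplus (s : Seminorm ℝ E2) : ℝ := ⨆ v : Metric.sphere (0 : E2) 1, (s (v : E2)) ^ 2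

/-- The unit ball of a seminorm. -/
def unitBallS (s : Seminorm ℝ E2) : Set E2 := {v | s v ≤ 1}

/-- The ellipse `M(D̄)` is inscribed in the unit ball of `s`. -/
def ellipseIn (s : Seminorm ℝ E2) (M : Matrix (Fin 2) (Fin 2) ℝ) : Prop :=
  (Matrix.toEuclideanLin M) '' (Metric.closedBall 0 1) ⊆ unitBallS s

/-- The area of the largest ellipse inscribed in the unit ball of `s`
(the area of the Loewner ellipse); the ellipse `M(D̄)` has area `π |det M|`. -/
def LoewnerArea (s : Seminorm ℝ E2) : ℝ :=
  sSup {a : ℝ | ∃ M : Matrix (Fin 2) (Fin 2) ℝ, ellipseIn s M ∧ a = π * |M.det|}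

/-- The inscribed Riemannian (Ivanov) Jacobian `J^i(s) = π / |L|`. -/
def Ji (s : Seminorm ℝ E2) : ℝ := π / LoewnerArea s

/-- `s` is isotropic: some round disc `t·D̄` is inscribed in the unit ball of `s` and has at
least the area of every inscribed ellipse, i.e. the Loewner ellipse is a round disc. -/
def Isotropic (s : Seminorm ℝ E2) : Prop :=
  ∃ t : ℝ, 0 < t ∧ Metric.closedBall (0 : E2) t ⊆ unitBallS s ∧
    ∀ M : Matrix (Fin 2) (Fin 2) ℝ, ellipseIn s M → π * |M.det| ≤ π * t ^ 2

/-- A Jacobian (definition of area): monotone, degree-2 homogeneous, `SL₂`-invariant,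
normalized on the Euclidean norm. -/
def IsJacobian (J : Seminorm ℝ E2 → ℝ) : Prop :=
  (∀ s, 0 ≤ J s) ∧ Monot J ∧ Homog J ∧ SL2inv J ∧ J (normSeminorm ℝ E2) = 1

open Metric

namespace Seminorm

variable {F : Type*} [NormedAddCommGroup F] [NormedSpace ℝ F]

theorem continuous_of_finiteDimensional [FiniteDimensional ℝ F] (p : Seminorm ℝ F) :
    Continuous p :=
  continuousOn_univ.mp (p.convexOn.continuousOn isOpen_univ)

theorem le_mul_norm_of_forall_sphere (p : Seminorm ℝ F) {C : ℝ}
    (h : ∀ u ∈ sphere (0 : F) 1, p u ≤ C) (v : F) : p v ≤ C * ‖v‖ := by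
  rcases eq_or_ne v 0 with rfl | hv
  · simp
  have hnorm : ‖v‖ ≠ 0 := norm_ne_zero_iff.mpr hv
  have hu : ‖v‖⁻¹ • v ∈ sphere (0 : F) 1 := by
    rw [mem_sphere_zero_iff_norm, norm_smul, norm_inv, norm_norm, inv_mul_cancel₀ hnorm]
  calc p v = ‖v‖ * p (‖v‖⁻¹ • v) := by
        rw [map_smul_eq_mul, norm_inv, norm_norm, mul_inv_cancel_left₀ hnorm]
    _ ≤ ‖v‖ * C := mul_le_mul_of_nonneg_left (h _ hu) (norm_nonneg v)
    _ = C * ‖v‖ := mul_comm _ _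

theorem closedBall_zero_subset_iff (p : Seminorm ℝ F) {t : ℝ} (ht : 0 < t) :
    Metric.closedBall (0 : F) t ⊆ {v | p v ≤ 1} ↔ ∀ u ∈ sphere (0 : F) 1, p u ≤ t⁻¹ := by
  constructor
  · intro h u hu
    have htu : t • u ∈ Metric.closedBall (0 : F) t := by
      rw [mem_closedBall_zero_iff, norm_smul, mem_sphere_zero_iff_norm.mp hu, Real.norm_of_nonneg
        ht.le, mul_one]
    have : p (t • u) ≤ 1 := h htu
    rw [map_smul_eq_mul, Real.norm_of_nonneg ht.le] at this
    rwa [← one_div, le_div_iff₀ ht, mul_comm]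
  · intro h v hv
    rw [mem_closedBall_zero_iff] at hv
    calc p v ≤ t⁻¹ * ‖v‖ := p.le_mul_norm_of_forall_sphere h v
      _ ≤ t⁻¹ * t := by gcongr
      _ = 1 := inv_mul_cancel₀ ht.ne'

end Seminorm

section ReshetnyakEnergy

variable (s : Seminorm ℝ E2)

theorem bddAbove_range_sq_sphere :
    BddAbove (Set.range fun v : sphere (0 : E2) 1 => s (v : E2) ^ 2) := by
  rw [← Set.image_univ, ← Set.image_image (fun x => s x ^ 2) Subtype.val, Set.image_univ,
    Subtype.range_coe]
  exact (isCompact_sphere 0 1).bddAbove_image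
    ((s.continuous_of_finiteDimensional.pow 2).continuousOn)

theorem sq_le_iplus (u : E2) (hu : u ∈ sphere (0 : E2) 1) : s u ^ 2 ≤ Iplus s :=
  le_ciSup (bddAbove_range_sq_sphere s) ⟨u, hu⟩

theorem iplus_le_sq_iff {C : ℝ} (hC : 0 ≤ C) :
    Iplus s ≤ C ^ 2 ↔ ∀ u ∈ sphere (0 : E2) 1, s u ≤ C := by
  have : Nonempty (sphere (0 : E2) 1) :=
    (NormedSpace.sphere_nonempty (E := E2).mpr zero_le_one).to_subtype
  rw [Iplus, ciSup_le_iff (bddAbove_range_sq_sphere s), Subtype.forall]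
  exact forall₂_congr fun u _ => pow_le_pow_iff_left₀ (apply_nonneg s u) hC two_ne_zero

theorem closedBall_subset_unitBallS_iff {t : ℝ} (ht : 0 < t) :
    closedBall (0 : E2) t ⊆ unitBallS s ↔ Iplus s ≤ t⁻¹ ^ 2 := by
  rw [iplus_le_sq_iff s (by positivity)]
  exact s.closedBall_zero_subset_iff ht

theorem ellipseIn_iff_iplus_le_one (M : Matrix (Fin 2) (Fin 2) ℝ) :
    ellipseIn s M ↔ Iplus (compM s M) ≤ 1 :=
  Set.image_subset_iff.trans <| (closedBall_subset_unitBallS_iff (compM s M) one_pos).trans <| by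
    rw [inv_one, one_pow]

theorem iplus_compM_smul (c : ℝ) (M : Matrix (Fin 2) (Fin 2) ℝ) :
    Iplus (compM s (c • M)) = c ^ 2 * Iplus (compM s M) := by
  simp only [Iplus, Real.mul_iSup_of_nonneg (sq_nonneg c), compM, Seminorm.comp_apply,
    LinearEquiv.map_smul, LinearMap.smul_apply, map_smul_eq_mul, Real.norm_eq_abs, mul_pow, sq_abs]

variable {s}

theorem iplus_pos (hs : IsNorm s) : 0 < Iplus s := by
  obtain ⟨u, hu⟩ := NormedSpace.sphere_nonempty (E := E2) (x := 0).mpr zero_le_one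
  have hu0 : u ≠ 0 := ne_zero_of_mem_unit_sphere ⟨u, hu⟩
  exact (pow_pos (hs u hu0) 2).trans_le (sq_le_iplus s u hu)

theorem IsNorm.compM (hs : IsNorm s) {M : Matrix (Fin 2) (Fin 2) ℝ}
    (hM : M.det ≠ 0) : IsNorm (compM s M) := by
  intro v hv
  refine hs _ fun h => hv (WithLp.ofLp_injective 2 ?_)
  apply mulVec_injective_of_det_ne_zero hM
  simpa [toLpLin_apply] using congrArg WithLp.ofLp h

theorem det_smul_fin_two {R : Type*} [CommRing R] (c : R) (M : Matrix (Fin 2) (Fin 2) R) :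
    (c • M).det = c ^ 2 * M.det := by
  simp

theorem ellipseIn.mul {M N : Matrix (Fin 2) (Fin 2) ℝ} (hM : ellipseIn s M)
    (hN : ∀ v, ‖toEuclideanLin N v‖ ≤ ‖v‖) : ellipseIn s (M * N) := by
  rintro _ ⟨v, hv, rfl⟩
  rw [toLpLin_mul_same, LinearMap.comp_apply]
  exact hM ⟨_, (mem_closedBall_zero_iff.mpr ((hN v).trans (mem_closedBall_zero_iff.mp hv))), rfl⟩

theorem exists_ellipseIn_det_eq_abs {M : Matrix (Fin 2) (Fin 2) ℝ} (hM : ellipseIn s M) :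
    ∃ N, ellipseIn s N ∧ N.det = |M.det| := by
  rcases le_or_gt 0 M.det with hpos | hneg
  · exact ⟨M, hM, (abs_of_nonneg hpos).symm⟩
  refine ⟨M * !![1, 0; 0, -1], hM.mul fun v => le_of_eq ?_, ?_⟩
  · simp [EuclideanSpace.norm_eq, toLpLin_apply, Fin.sum_univ_two, vecHead, vecTail]
  · simp [det_fin_two_of, abs_of_neg hneg]

theorem iplus_mul_det_le_one_of_minimal (hmin : ∀ T : SL2, Iplus s ≤ Iplus (compM s T))
    {M : Matrix (Fin 2) (Fin 2) ℝ} (hM : ellipseIn s M) (hdet : 0 < M.det) :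
    Iplus s * M.det ≤ 1 := by
  set c := (√M.det)⁻¹
  have hc : c ^ 2 = M.det⁻¹ := by rw [inv_pow, Real.sq_sqrt hdet.le]
  have hT : (c • M).det = 1 := by rw [det_smul_fin_two, hc, inv_mul_cancel₀ hdet.ne']
  have := calc Iplus s ≤ Iplus (compM s (c • M)) := hmin ⟨c • M, hT⟩
    _ = M.det⁻¹ * Iplus (compM s M) := by rw [iplus_compM_smul, hc]
    _ ≤ M.det⁻¹ := mul_le_of_le_one_right (by positivity) ((ellipseIn_iff_iplus_le_one s M).mp hM)
  rwa [← one_div, le_div_iff₀ hdet] at this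

theorem isotropic_of_minimal (hs : IsNorm s)
    (hmin : ∀ T : SL2, Iplus s ≤ Iplus (compM s T)) : Isotropic s := by
  have hpos := iplus_pos hs
  refine ⟨(√(Iplus s))⁻¹, by positivity, ?_, fun M hM => ?_⟩
  · rw [closedBall_subset_unitBallS_iff s (by positivity), inv_inv, Real.sq_sqrt hpos.le]
  obtain ⟨N, hN, hdet⟩ := exists_ellipseIn_det_eq_abs hM
  rcases (abs_nonneg M.det).eq_or_lt with hzero | hdet_pos
  · rw [← hzero, mul_zero]; positivity
  rw [← hdet] at hdet_pos ⊢
  rw [inv_pow, Real.sq_sqrt hpos.le]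
  gcongr
  rw [← one_div, le_div_iff₀ hpos, mul_comm]
  exact iplus_mul_det_le_one_of_minimal hmin hN hdet_pos

theorem minimal_of_isotropic (hs : IsNorm s) (hiso : Isotropic s) (T : SL2) :
    Iplus s ≤ Iplus (compM s T) := by
  obtain ⟨t, ht, hdisc, hmax⟩ := hiso
  set a := Iplus (compM s T)
  have ha : 0 < a := iplus_pos (hs.compM (by simp))
  set c := (√a)⁻¹
  have hc : c ^ 2 = a⁻¹ := by rw [inv_pow, Real.sq_sqrt ha.le]
  have hell : ellipseIn s (c • (T : Matrix (Fin 2) (Fin 2) ℝ)) := by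
    rw [ellipseIn_iff_iplus_le_one, iplus_compM_smul, hc, inv_mul_cancel₀ ha.ne']
  have hdet := hmax _ hell
  rw [det_smul_fin_two, T.2, mul_one, hc, abs_of_pos (by positivity)] at hdet
  have hat : a⁻¹ ≤ t ^ 2 := le_of_mul_le_mul_left hdet Real.pi_pos
  calc Iplus s ≤ t⁻¹ ^ 2 := (closedBall_subset_unitBallS_iff s ht).mp hdisc
    _ = (t ^ 2)⁻¹ := inv_pow t 2
    _ ≤ a := (inv_le_comm₀ (by positivity) ha).mpr hat

end ReshetnyakEnergy

/-- A norm is minimal for the Reshetnyak energy within its `SL₂`-orbit iff it is isotropic. -/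
theorem stmt10 (s : Seminorm ℝ E2) (hs : IsNorm s) :
    (∀ T : SL2, Iplus s ≤ Iplus (compM s (T : Matrix (Fin 2) (Fin 2) ℝ))) ↔ Isotropic s :=
  ⟨isotropic_of_minimal hs, fun hiso T => minimal_of_isotropic hs hiso T⟩
end
end

section
/- Let 𝓘 : 𝔖₂ → [0,∞) be a definition of energy (continuous, monotone, degree-2 homogeneous, SO₂-invariant, proper). Then there exists Q > 0 such that every 𝓘-minimal norm s (meaning 𝓘(s) ≤ 𝓘(s∘T) for all T ∈ SL(2,ℝ)) is Q-quasiconformal: s(v) ≤ Q·s(w) for all v, w on the Euclidean unit circle. -/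
open Matrix MeasureTheory Real

noncomputable section

/-- Continuity with respect to the sup-metric `d(s,s') = max_{v ∈ S¹} |s v - s' v|`. -/
def ContinuousSN (I : Seminorm ℝ E2 → ℝ) : Prop :=
  ∀ s : Seminorm ℝ E2, ∀ ε > (0 : ℝ), ∃ δ > (0 : ℝ), ∀ s' : Seminorm ℝ E2,
    (∀ v : E2, ‖v‖ = 1 → |s' v - s v| ≤ δ) → |I s' - I s| ≤ ε

/-- `SO₂`-invariance of a functional on seminorms. -/
def SO2inv (I : Seminorm ℝ E2 → ℝ) : Prop :=
  ∀ (s : Seminorm ℝ E2) (T : Matrix (Fin 2) (Fin 2) ℝ),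
    T ∈ Matrix.orthogonalGroup (Fin 2) ℝ → T.det = 1 → I (compM s T) = I s

/-- Properness: the sublevel set `I⁻¹([0,1])` is (sequentially) compact with respect to the
sup-metric on the unit circle. -/
def ProperEnergy (I : Seminorm ℝ E2 → ℝ) : Prop :=
  ∀ f : ℕ → Seminorm ℝ E2, (∀ n, I (f n) ≤ 1) →
    ∃ (s : Seminorm ℝ E2) (φ : ℕ → ℕ), StrictMono φ ∧ I s ≤ 1 ∧
      Filter.Tendsto (fun n => ⨆ v : Metric.sphere (0 : E2) 1, |f (φ n) (v : E2) - s (v : E2)|)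
        Filter.atTop (nhds 0)

/-- A (conformally invariant) definition of energy. -/
def IsEnergy (I : Seminorm ℝ E2 → ℝ) : Prop :=
  (∀ s, 0 ≤ I s) ∧ ContinuousSN I ∧ Monot I ∧ Homog I ∧ SO2inv I ∧ ProperEnergy I

/-!
If no `Q` works, there are minimal norms `sₙ` and unit vectors `vₙ, wₙ` with
`(n + 1) sₙ wₙ < sₙ vₙ`. Properness forces `𝓘(sₙ) > 0`, so by homogeneity we may rescale to
`𝓘(sₙ) = 1`; properness then gives a subsequence converging uniformly on the circle to some `t`,
which by continuity has `𝓘(t) = 1` and is again minimal. A minimal seminorm of positive energy is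
a norm: if `t w = 0` for a unit `w`, some `T ∈ SL₂` gives `t ∘ T = t / 2`, hence
`𝓘(t) ≤ 𝓘(t) / 4`. But `sₙ vₙ` stays bounded along the subsequence, so `sₙ wₙ → 0` and a limit
point `w` of the `wₙ` has `t w = 0`.
-/

namespace Seminorm

lemma continuous_of_finiteDimensional_s13 {E : Type*} [NormedAddCommGroup E]
    [NormedSpace ℝ E] [FiniteDimensional ℝ E] (p : Seminorm ℝ E) : Continuous p :=
  continuousOn_univ.mp (p.convexOn.continuousOn isOpen_univ)

lemma map_add_eq_of_map_eq_zero {E : Type*} [AddCommGroup E] [Module ℝ E]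
    (p : Seminorm ℝ E) {y : E} (hy : p y = 0) (x : E) : p (x + y) = p x := by
  have h := p.norm_sub_map_le_sub (x + y) x
  rw [add_sub_cancel_left, hy, Real.norm_eq_abs] at h
  linarith [abs_nonpos_iff.mp h]

def supDist (p q : Seminorm ℝ E2) : ℝ := ⨆ v : Metric.sphere (0 : E2) 1, |p v - q v|

variable (p q : Seminorm ℝ E2)

lemma bddAbove_range_abs_sub :
    BddAbove (Set.range fun v : Metric.sphere (0 : E2) 1 => |p v - q v|) :=
  (isCompact_range (by
    have := p.continuous_of_finiteDimensional_s13
    have := q.continuous_of_finiteDimensional_s13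
    fun_prop)).bddAbove

lemma abs_sub_le_supDist {v : E2} (hv : ‖v‖ = 1) : |p v - q v| ≤ supDist p q :=
  le_ciSup (bddAbove_range_abs_sub p q) ⟨v, mem_sphere_zero_iff_norm.mpr hv⟩

lemma supDist_nonneg : 0 ≤ supDist p q :=
  have ⟨_, hv⟩ := exists_norm_eq E2 zero_le_one
  (abs_nonneg _).trans (abs_sub_le_supDist p q hv)

lemma abs_sub_le_norm_mul_supDist (u : E2) : |p u - q u| ≤ ‖u‖ * supDist p q := by
  rcases eq_or_ne u 0 with rfl | hu
  · simp
  have hr : 0 < ‖u‖ := norm_pos_iff.mpr hu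
  have hx : ‖‖u‖⁻¹ • u‖ = 1 := by rw [norm_smul, norm_inv, norm_norm, inv_mul_cancel₀ hr.ne']
  calc |p u - q u| = ‖u‖ * |p (‖u‖⁻¹ • u) - q (‖u‖⁻¹ • u)| := by
        simp only [map_smul_eq_mul, norm_inv, norm_norm, ← mul_sub, abs_mul, abs_inv, abs_norm]
        field_simp
    _ ≤ ‖u‖ * supDist p q := by gcongr; exact abs_sub_le_supDist p q hx

lemma supDist_comp_le (A : E2 →ₗ[ℝ] E2) :
    supDist (p.comp A) (q.comp A) ≤ ‖LinearMap.toContinuousLinearMap A‖ * supDist p q := by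
  have : Nonempty (Metric.sphere (0 : E2) 1) :=
    (NormedSpace.sphere_nonempty.mpr zero_le_one).to_subtype
  refine ciSup_le fun v => ?_
  calc |p (A v) - q (A v)| ≤ ‖A v‖ * supDist p q := abs_sub_le_norm_mul_supDist p q (A v)
    _ ≤ ‖LinearMap.toContinuousLinearMap A‖ * supDist p q := by
      gcongr
      · exact supDist_nonneg p q
      · simpa [mem_sphere_zero_iff_norm.mp v.2] using
          (LinearMap.toContinuousLinearMap A).le_opNorm v

end Seminorm

open Filter Topology Seminorm

lemma ContinuousSN.tendsto {I : Seminorm ℝ E2 → ℝ} (hI : ContinuousSN I) {f : ℕ → Seminorm ℝ E2}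
    {t : Seminorm ℝ E2} (hf : Tendsto (fun n => supDist (f n) t) atTop (𝓝 0)) :
    Tendsto (fun n => I (f n)) atTop (𝓝 (I t)) := by
  refine Metric.tendsto_atTop.mpr fun ε hε => ?_
  obtain ⟨δ, hδ, hIδ⟩ := hI t (ε / 2) (half_pos hε)
  obtain ⟨N, hN⟩ := Metric.tendsto_atTop.mp hf δ hδ
  refine ⟨N, fun n hn => (hIδ (f n) fun v hv => ?_).trans_lt (half_lt_self hε)⟩
  have := hN n hn
  rw [Real.dist_0_eq_abs, abs_of_nonneg (supDist_nonneg _ _)] at this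
  exact (abs_sub_le_supDist _ _ hv).trans this.le

lemma bddAbove_of_tendsto_supDist {f : ℕ → Seminorm ℝ E2} {t : Seminorm ℝ E2}
    (hf : Tendsto (fun n => supDist (f n) t) atTop (𝓝 0)) :
    ∃ C, ∀ n (v : E2), ‖v‖ = 1 → f n v ≤ C := by
  obtain ⟨B, hB⟩ := hf.bddAbove_range
  obtain ⟨C, -, hC⟩ := t.bound_of_continuous_normedSpace t.continuous_of_finiteDimensional_s13
  refine ⟨C + B, fun n v hv => ?_⟩
  have h1 := (abs_le.mp (abs_sub_le_supDist (f n) t hv)).2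
  have h2 := hC v
  have h3 : supDist (f n) t ≤ B := hB (Set.mem_range_self n)
  rw [hv, mul_one] at h2
  linarith

lemma exists_map_eq_zero_of_tendsto {f : ℕ → Seminorm ℝ E2} {t : Seminorm ℝ E2}
    (hf : Tendsto (fun n => supDist (f n) t) atTop (𝓝 0)) {w : ℕ → E2} (hw : ∀ n, ‖w n‖ = 1)
    (hfw : Tendsto (fun n => f n (w n)) atTop (𝓝 0)) : ∃ w₀ : E2, ‖w₀‖ = 1 ∧ t w₀ = 0 := by
  obtain ⟨w₀, hw₀, ψ, hψ, hlim⟩ := (isCompact_sphere (0 : E2) 1).tendsto_subseq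
    (fun n => mem_sphere_zero_iff_norm.mpr (hw n))
  refine ⟨w₀, mem_sphere_zero_iff_norm.mp hw₀, tendsto_nhds_unique
    ((t.continuous_of_finiteDimensional_s13.tendsto w₀).comp hlim) ?_⟩
  have hsum := (hfw.comp hψ.tendsto_atTop).add (hf.comp hψ.tendsto_atTop)
  rw [add_zero] at hsum
  refine squeeze_zero (fun n => apply_nonneg t _) (fun n => ?_) hsum
  have := (abs_le.mp (abs_sub_le_supDist (f (ψ n)) t (hw (ψ n)))).1
  simp only [Function.comp_apply]
  linarith

def IsMinimal (I : Seminorm ℝ E2 → ℝ) (s : Seminorm ℝ E2) : Prop :=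
  ∀ T : SL2, I s ≤ I (compM s (T : Matrix (Fin 2) (Fin 2) ℝ))

lemma compM_smul (c : NNReal) (s : Seminorm ℝ E2) (M : Matrix (Fin 2) (Fin 2) ℝ) :
    compM (c • s) M = c • compM s M :=
  rfl

lemma IsMinimal.smul {I : Seminorm ℝ E2 → ℝ} (hI : Homog I) {s : Seminorm ℝ E2}
    (hs : IsMinimal I s) (c : NNReal) : IsMinimal I (c • s) := fun T => by
  rw [compM_smul, hI, hI]
  exact mul_le_mul_of_nonneg_left (hs T) (sq_nonneg _)

lemma IsMinimal.of_tendsto {I : Seminorm ℝ E2 → ℝ} (hI : ContinuousSN I)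
    {f : ℕ → Seminorm ℝ E2} {t : Seminorm ℝ E2} (hmin : ∀ n, IsMinimal I (f n))
    (hf : Tendsto (fun n => supDist (f n) t) atTop (𝓝 0)) : IsMinimal I t := fun T => by
  set A := LinearMap.toContinuousLinearMap (Matrix.toEuclideanLin (T : Matrix (Fin 2) (Fin 2) ℝ))
  have hfT : Tendsto (fun n => supDist (compM (f n) T) (compM t T)) atTop (𝓝 0) := by
    refine squeeze_zero (fun n => supDist_nonneg _ _) (fun n => supDist_comp_le _ _ _) ?_
    simpa using hf.const_mul ‖A‖
  exact le_of_tendsto_of_tendsto' (hI.tendsto hf) (hI.tendsto hfT) fun n => hmin n T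

lemma exists_compM_eq_half_smul {s : Seminorm ℝ E2} {w : E2} (hw : ‖w‖ = 1) (hsw : s w = 0) :
    ∃ T : SL2, compM s (T : Matrix (Fin 2) (Fin 2) ℝ) = (1 / 2 : NNReal) • s := by
  have hab : w 0 ^ 2 + w 1 ^ 2 = 1 := by
    simpa [EuclideanSpace.norm_eq, Fin.sum_univ_two, Real.sqrt_eq_one] using hw
  -- `T = ½ + (3/2) w wᵀ` has determinant 1 and halves every vector modulo `ℝ w`
  let T : Matrix (Fin 2) (Fin 2) ℝ :=
    !![1/2 + 3/2 * w 0 ^ 2, 3/2 * w 0 * w 1; 3/2 * w 0 * w 1, 1/2 + 3/2 * w 1 ^ 2]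
  have hdet : T.det = 1 := by
    rw [Matrix.det_fin_two_of]; linear_combination (3/4 : ℝ) * hab
  have hT : ∀ v : E2, Matrix.toEuclideanLin T v
      = (1 / 2 : ℝ) • v + (3/2 * (w 0 * v 0 + w 1 * v 1)) • w := by
    intro v
    ext j
    fin_cases j <;> simp [T, Matrix.toLpLin_apply, dotProduct, Fin.sum_univ_two] <;> ring
  refine ⟨⟨T, hdet⟩, Seminorm.ext fun v => ?_⟩
  have hsw' : s ((3/2 * (w 0 * v 0 + w 1 * v 1)) • w) = 0 := by rw [map_smul_eq_mul, hsw, mul_zero]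
  simp only [compM, Seminorm.comp_apply, hT, s.map_add_eq_of_map_eq_zero hsw', map_smul_eq_mul]
  simp [NNReal.smul_def]

lemma IsMinimal.isNorm {I : Seminorm ℝ E2 → ℝ} (hI : Homog I) {s : Seminorm ℝ E2}
    (hs : IsMinimal I s) (hIs : 0 < I s) : IsNorm s := by
  intro v hv
  by_contra! hsv
  have hu : ‖‖v‖⁻¹ • v‖ = 1 := by
    rw [norm_smul, norm_inv, norm_norm, inv_mul_cancel₀ (norm_ne_zero_iff.mpr hv)]
  have hsu : s (‖v‖⁻¹ • v) = 0 := by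
    rw [map_smul_eq_mul, le_antisymm hsv (apply_nonneg s v), mul_zero]
  obtain ⟨T, hT⟩ := exists_compM_eq_half_smul hu hsu
  have := hs T
  rw [hT, hI] at this
  norm_num at this
  linarith

lemma ProperEnergy.pos {I : Seminorm ℝ E2 → ℝ} (hI : ProperEnergy I) (hpos : ∀ s, 0 ≤ I s)
    (hhom : Homog I) {s : Seminorm ℝ E2} {v : E2} (hv : ‖v‖ = 1) (hsv : 0 < s v) : 0 < I s := by
  refine (hpos s).lt_of_ne fun h => ?_
  -- all multiples of `s` lie in the compact sublevel set, which is impossible as `s v ≠ 0`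
  let f : ℕ → Seminorm ℝ E2 := fun n => (n : NNReal) • s
  obtain ⟨t, φ, hφ, -, hlim⟩ := hI f fun n => by rw [hhom, ← h, mul_zero]; exact zero_le_one
  obtain ⟨C, hC⟩ := bddAbove_of_tendsto_supDist hlim
  obtain ⟨n, hn⟩ := exists_nat_gt (C / s v)
  have := hC n v hv
  have hφn : (n : ℝ) ≤ φ n := Nat.cast_le.mpr hφ.le_apply
  simp only [f, _root_.smul_apply, NNReal.smul_def, NNReal.coe_natCast, smul_eq_mul] at this
  rw [div_lt_iff₀ hsv] at hn
  nlinarith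

lemma exists_smul_eq_one {I : Seminorm ℝ E2 → ℝ} (hI : Homog I) {s : Seminorm ℝ E2}
    (hs : 0 < I s) : ∃ c : NNReal, I (c • s) = 1 := by
  refine ⟨NNReal.sqrt (I s).toNNReal⁻¹, ?_⟩
  rw [hI]
  simp [hs.le, hs.ne']

lemma exists_isNorm_tendsto_of_isMinimal {I : Seminorm ℝ E2 → ℝ} (hcont : ContinuousSN I)
    (hhom : Homog I) (hproper : ProperEnergy I) {f : ℕ → Seminorm ℝ E2}
    (hmin : ∀ n, IsMinimal I (f n)) (hf : ∀ n, I (f n) = 1) :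
    ∃ (t : Seminorm ℝ E2) (φ : ℕ → ℕ), StrictMono φ ∧ IsNorm t ∧
      Tendsto (fun n => supDist (f (φ n)) t) atTop (𝓝 0) := by
  obtain ⟨t, φ, hφ, -, hlim⟩ := hproper f fun n => (hf n).le
  have hIt : I t = 1 := tendsto_nhds_unique (hcont.tendsto hlim) (by simp [hf])
  have htmin : IsMinimal I t := IsMinimal.of_tendsto hcont (fun n => hmin (φ n)) hlim
  exact ⟨t, φ, hφ, htmin.isNorm hhom (by rw [hIt]; exact one_pos), hlim⟩

lemma tendsto_zero_of_add_one_mul_le {a : ℕ → ℝ} {φ : ℕ → ℕ} (hφ : StrictMono φ) {C : ℝ}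
    (ha : ∀ n, 0 ≤ a n) (h : ∀ n, ((φ n : ℝ) + 1) * a n ≤ C) : Tendsto a atTop (𝓝 0) := by
  have hdecay : Tendsto (fun n => C / ((φ n : ℝ) + 1)) atTop (𝓝 0) :=
    tendsto_const_nhds.div_atTop <| tendsto_atTop_add_const_right _ 1 <|
      tendsto_natCast_atTop_atTop.comp hφ.tendsto_atTop
  refine squeeze_zero ha (fun n => ?_) hdecay
  rw [le_div_iff₀ (by positivity), mul_comm]
  exact h n

/-- There is `Q > 0` such that every `𝓘`-minimal norm is `Q`-quasiconformal. -/
theorem stmt13 (I : Seminorm ℝ E2 → ℝ) (hI : IsEnergy I) :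
    ∃ Q : ℝ, 0 < Q ∧ ∀ s : Seminorm ℝ E2, IsNorm s →
      (∀ T : SL2, I s ≤ I (compM s (T : Matrix (Fin 2) (Fin 2) ℝ))) →
      ∀ v w : E2, ‖v‖ = 1 → ‖w‖ = 1 → s v ≤ Q * s w := by
  obtain ⟨hpos, hcont, -, hhom, -, hproper⟩ := hI
  by_contra! hcon
  choose s hs hmin v w hv hw hlt using fun n : ℕ => hcon (n + 1) n.cast_add_one_pos
  choose c hIc using fun n => exists_smul_eq_one hhom <|
    hproper.pos hpos hhom (hv n) (hs n _ (ne_zero_of_norm_ne_zero (by simp [hv n])))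
  obtain ⟨t, φ, hφ, ht, hlim⟩ := exists_isNorm_tendsto_of_isMinimal hcont hhom hproper
    (fun n => IsMinimal.smul hhom (hmin n) (c n)) hIc
  obtain ⟨C, hC⟩ := bddAbove_of_tendsto_supDist hlim
  have hw0 : Tendsto (fun n => (c (φ n) • s (φ n)) (w (φ n))) atTop (𝓝 0) := by
    refine tendsto_zero_of_add_one_mul_le (C := C) hφ (fun n => apply_nonneg _ _) fun n => ?_
    have hbound := hC n (v (φ n)) (hv (φ n))
    simp only [_root_.smul_apply, NNReal.smul_def, smul_eq_mul] at hbound ⊢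
    calc ((φ n : ℝ) + 1) * (c (φ n) * s (φ n) (w (φ n)))
        = c (φ n) * ((φ n + 1) * s (φ n) (w (φ n))) := by ring
      _ ≤ c (φ n) * s (φ n) (v (φ n)) := by gcongr; exact (hlt (φ n)).le
      _ ≤ C := hbound
  obtain ⟨w₀, hw₀, htw₀⟩ := exists_map_eq_zero_of_tendsto hlim (fun n => hw (φ n)) hw0
  exact (ht w₀ (ne_zero_of_norm_ne_zero (by simp [hw₀]))).ne' htw₀
end
end
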